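/- Let F : ℝ^d → ℝ^d, let B ⊆ ℝ^d, and let L ≥ 0 satisfy ‖F(p) − F(q)‖ ≤ L‖p − q‖ for all p, q ∈ B. Let y_* be a strong solution of the IVP y' = F(y) + f(t), y(0) = g with y_*(t) ∈ B for all t ∈ [0,T], let u ∈ X satisfy u(t) ∈ B for all t ∈ [0,T], and set w(t) = g + ∫₀ᵗ (F(u(s)) + f(s)) ds. Then ‖y_* − w‖_{L²(0,T;ℝ^d)} ≤ (L·T/√2) ‖y_* − u‖_{L²(0,T;ℝ^d)}. -/

import Mathlib

open MeasureTheory Set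
open scoped RealInnerProductSpace

noncomputable section

/-- `ℝ^d`. -/
abbrev Euc (d : ℕ) := EuclideanSpace ℝ (Fin d)

/-- `(u, u')` represents an element of `X = H¹(0,T;ℝ^d)`: `u` is absolutely continuous
(equal to the integral of its a.e. derivative `u'`) and `u' ∈ L²(0,T;ℝ^d)`. -/
def MemX {d : ℕ} (T : ℝ) (u u' : ℝ → Euc d) : Prop :=
  MemLp u' 2 (volume.restrict (Icc (0:ℝ) T)) ∧
  ∀ t ∈ Icc (0:ℝ) T, u t = u 0 + ∫ s in (0:ℝ)..t, u' s

/-- The inner product `⟨·,·⟩_X` on `X`. -/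
def innerX {d : ℕ} (T : ℝ) (u u' v v' : ℝ → Euc d) : ℝ :=
  (∫ t in (0:ℝ)..T, ⟪u' t, v' t⟫) + ⟪u 0, v 0⟫

/-- The energy norm `‖·‖_X` on `X`. -/
def normX {d : ℕ} (T : ℝ) (u u' : ℝ → Euc d) : ℝ :=
  Real.sqrt (innerX T u u' u u')

/-- The `L²(0,T;ℝ^d)` norm. -/
def L2norm {d : ℕ} (T : ℝ) (w : ℝ → Euc d) : ℝ :=
  Real.sqrt (∫ t in (0:ℝ)..T, ‖w t‖ ^ 2)

/-- The least-squares objective `J(y; F, f, g)`. -/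
def Jfun {d : ℕ} (T : ℝ) (F : Euc d → Euc d) (f : ℝ → Euc d) (g : Euc d)
    (y y' : ℝ → Euc d) : ℝ :=
  (1/2) * (∫ t in (0:ℝ)..T, ‖y' t - F (y t) - f t‖ ^ 2) + (1/2) * ‖y 0 - g‖ ^ 2

/-- A partition `0 = τ₀ < τ₁ < ⋯ < τ_N = T` of `[0,T]`. -/
structure Partition' (T : ℝ) where
  N : ℕ
  τ : ℕ → ℝ
  hN : 0 < N
  left : τ 0 = 0
  right : τ N = T
  mono : ∀ i < N, τ i < τ (i + 1)

/-- The mesh size `h = max_i (τ_{i+1} - τ_i)` of a partition. -/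
def Partition'.mesh {T : ℝ} (P : Partition' T) : ℝ :=
  (Finset.range P.N).sup' (Finset.nonempty_range_iff.mpr P.hN.ne') fun i => P.τ (i + 1) - P.τ i

/-- `v` is (on `[0,T]`) piecewise affine w.r.t. the partition `P`,
i.e. `v` belongs to the piecewise linear finite element space `X^h`. -/
def PWLinear {d : ℕ} {T : ℝ} (P : Partition' T) (v : ℝ → Euc d) : Prop :=
  ∀ i < P.N, ∃ a b : Euc d, ∀ t ∈ Icc (P.τ i) (P.τ (i + 1)), v t = a + t • b

/-- `(p, p')` is the orthogonal projection `Π_h (u,u')` of `(u, u') ∈ X` onto the piecewise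
linear finite element space `X^h` attached to the partition `P`. -/
def IsProjX {d : ℕ} {T : ℝ} (P : Partition' T) (u u' p p' : ℝ → Euc d) : Prop :=
  MemX T p p' ∧ PWLinear P p ∧
  ∀ v v' : ℝ → Euc d, MemX T v v' → PWLinear P v →
    innerX T (fun t => u t - p t) (fun t => u' t - p' t) v v' = 0

/-- `(y, y')` is a strong solution of the IVP `y' = F(y) + f(t)`, `y(0) = g`. -/
def IsStrongSol {d : ℕ} (T : ℝ) (F : Euc d → Euc d) (f : ℝ → Euc d) (g : Euc d)
    (y y' : ℝ → Euc d) : Prop :=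
  MemX T y y' ∧ y 0 = g ∧ ∀ᵐ t ∂(volume.restrict (Ioc (0:ℝ) T)), y' t = F (y t) + f t

/-- `(y, y')` is an lsfem solution: a global minimizer of `J(·;F,f,g)` over `X^h`. -/
def IsLSFEMSol {d : ℕ} (T : ℝ) (F : Euc d → Euc d) (f : ℝ → Euc d) (g : Euc d)
    (P : Partition' T) (y y' : ℝ → Euc d) : Prop :=
  MemX T y y' ∧ PWLinear P y ∧
  ∀ z z' : ℝ → Euc d, MemX T z z' → PWLinear P z →
    Jfun T F f g y y' ≤ Jfun T F f g z z'

/-- `c` is the smallest constant with `max_{t∈[0,T]} ‖u(t)‖ ≤ c ‖u‖_X` for all `u ∈ X`. -/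
def IsEmbC (d : ℕ) (T : ℝ) (c : ℝ) : Prop :=
  IsLeast {a : ℝ | ∀ u u' : ℝ → Euc d, MemX T u u' →
    ∀ t ∈ Icc (0:ℝ) T, ‖u t‖ ≤ a * normX T u u'} c

/-- `c` is the smallest constant with `‖u‖_{L²} ≤ c ‖u‖_X` for all `u ∈ X`. -/
def IsEmbL2 (d : ℕ) (T : ℝ) (c : ℝ) : Prop :=
  IsLeast {a : ℝ | ∀ u u' : ℝ → Euc d, MemX T u u' → L2norm T u ≤ a * normX T u u'} c

/-- The smallness bound `1/√(2T² + T + c² + √((2T² + T + c²)² + 2Tc²(1+2T)))` from (A2). -/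
def A2bound (T c : ℝ) : ℝ :=
  1 / Real.sqrt (2*T^2 + T + c^2 + Real.sqrt ((2*T^2 + T + c^2)^2 + 2*T*c^2*(1+2*T)))

/-!
Since `y_* = g + ∫₀ᵗ (F(y_*) + f)`, the error `y_*(t) − w(t)` equals `∫₀ᵗ (F(y_*) − F(u))`,
whose norm is at most `L ∫₀ᵗ ‖y_* − u‖ ≤ L √t ‖y_* − u‖_{L²}` by Cauchy–Schwarz. Squaring and
integrating over `t ∈ [0,T]` produces the factor `T²/2`.
-/

theorem MemX.continuousOn {d : ℕ} {T : ℝ} {u u' : ℝ → Euc d} (hu : MemX T u u') (hT : 0 ≤ T) :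
    ContinuousOn u (Icc 0 T) := by
  have hu' : IntegrableOn u' (uIcc 0 T) := by
    rw [uIcc_of_le hT]
    exact hu.1.integrable one_le_two
  have := (continuousOn_const (c := u 0)).add (intervalIntegral.continuousOn_primitive_interval hu')
  rw [uIcc_of_le hT] at this
  exact this.congr hu.2

def picardMap {d : ℕ} (F : Euc d → Euc d) (f : ℝ → Euc d) (g : Euc d) (u : ℝ → Euc d) :
    ℝ → Euc d :=
  fun t => g + ∫ s in (0:ℝ)..t, (F (u s) + f s)

theorem IsStrongSol.sub_picardMap_eq_integral {d : ℕ} {T : ℝ} {F : Euc d → Euc d}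
    {f : ℝ → Euc d} {g : Euc d} {y y' u : ℝ → Euc d} (hy : IsStrongSol T F f g y y')
    (hFy : IntegrableOn (fun s => F (y s)) (Icc 0 T))
    (hFu : IntegrableOn (fun s => F (u s)) (Icc 0 T))
    (hf : IntegrableOn f (Icc 0 T)) {t : ℝ} (ht : t ∈ Icc 0 T) :
    y t - picardMap F f g u t = ∫ s in (0:ℝ)..t, (F (y s) - F (u s)) := by
  obtain ⟨⟨-, hyInt⟩, hy0, hyODE⟩ := hy
  have hsub : Icc 0 t ⊆ Icc 0 T := Icc_subset_Icc_right ht.2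
  have hint : ∀ v : ℝ → Euc d, IntegrableOn v (Icc 0 T) → IntervalIntegrable v volume 0 t :=
    fun v hv => (intervalIntegrable_iff_integrableOn_Icc_of_le ht.1).2 (hv.mono_set hsub)
  have hy_eq : y t = g + ∫ s in (0:ℝ)..t, (F (y s) + f s) := by
    rw [hyInt t ht, hy0, intervalIntegral.integral_of_le ht.1, intervalIntegral.integral_of_le ht.1]
    exact congrArg _ (integral_congr_ae
      (ae_restrict_of_ae_restrict_of_subset (Ioc_subset_Ioc le_rfl ht.2) hyODE))
  rw [hy_eq, picardMap, add_sub_add_left_eq_sub,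
    ← intervalIntegral.integral_sub (hint (fun s => F (y s) + f s) (hFy.add hf))
      (hint (fun s => F (u s) + f s) (hFu.add hf))]
  simp only [add_sub_add_right_eq_sub]

theorem intervalIntegral_le_sqrt_mul_sqrt_integral_sq {a b : ℝ} (hab : a ≤ b) {h : ℝ → ℝ}
    (hnn : 0 ≤ h) (hh : MemLp h 2 (volume.restrict (Ioc a b))) :
    ∫ s in a..b, h s ≤ √(b - a) * √(∫ s in a..b, h s ^ 2) := by
  have hCS := integral_mul_le_Lp_mul_Lq_of_nonneg (μ := volume.restrict (Ioc a b))
    Real.HolderConjugate.two_two (ae_of_all _ fun _ => zero_le_one) (ae_of_all _ hnn)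
    (memLp_const 1) (by rwa [ENNReal.ofReal_ofNat])
  simp only [one_mul, one_pow, integral_const, smul_eq_mul, mul_one, Real.rpow_two,
    measureReal_restrict_apply_univ, Real.volume_real_Ioc_of_le hab] at hCS
  rwa [Real.sqrt_eq_rpow, Real.sqrt_eq_rpow, intervalIntegral.integral_of_le hab,
    intervalIntegral.integral_of_le hab]

theorem L2norm_le_of_norm_le_mul_sqrt {d : ℕ} {T C : ℝ} {e : ℝ → Euc d} (hT : 0 ≤ T) (hC : 0 ≤ C)
    (he : ∀ t ∈ Icc 0 T, ‖e t‖ ≤ C * √t) :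
    L2norm T e ≤ C * T / √2 := by
  have hrhs : C * T / √2 = √(C ^ 2 * (T ^ 2 / 2)) := by
    rw [Real.sqrt_mul (sq_nonneg C), Real.sqrt_div (sq_nonneg T), Real.sqrt_sq hC,
      Real.sqrt_sq hT, mul_div_assoc]
  rw [hrhs, L2norm]
  refine Real.sqrt_le_sqrt ?_
  by_cases hi : IntervalIntegrable (fun t => ‖e t‖ ^ 2) volume 0 T
  · calc ∫ t in (0:ℝ)..T, ‖e t‖ ^ 2 ≤ ∫ t in (0:ℝ)..T, C ^ 2 * t := by
          refine intervalIntegral.integral_mono_on hT hi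
            ((continuous_const.mul continuous_id).intervalIntegrable 0 T) fun t ht => ?_
          calc ‖e t‖ ^ 2 ≤ (C * √t) ^ 2 := pow_le_pow_left₀ (norm_nonneg _) (he t ht) 2
            _ = C ^ 2 * t := by rw [mul_pow, Real.sq_sqrt ht.1]
      _ = C ^ 2 * (T ^ 2 / 2) := by
          rw [intervalIntegral.integral_const_mul, integral_id]
          ring
  · rw [intervalIntegral.integral_undef hi]
    positivity

theorem norm_sub_picardMap_le {d : ℕ} {T L : ℝ} {F : Euc d → Euc d} {f : ℝ → Euc d} {g : Euc d}
    {B : Set (Euc d)} {y y' u u' : ℝ → Euc d} (hT : 0 ≤ T) (hL : 0 ≤ L)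
    (hLip : ∀ p ∈ B, ∀ q ∈ B, ‖F p - F q‖ ≤ L * ‖p - q‖) (hf : IntegrableOn f (Icc 0 T))
    (hy : IsStrongSol T F f g y y') (hyB : ∀ t ∈ Icc 0 T, y t ∈ B)
    (hu : MemX T u u') (huB : ∀ t ∈ Icc 0 T, u t ∈ B) {t : ℝ} (ht : t ∈ Icc 0 T) :
    ‖y t - picardMap F f g u t‖ ≤ L * √(∫ s in (0:ℝ)..T, ‖y s - u s‖ ^ 2) * √t := by
  have hF : ContinuousOn F B :=
    (LipschitzOnWith.of_dist_le_mul (K := L.toNNReal) fun p hp q hq => by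
      simpa [dist_eq_norm, Real.coe_toNNReal L hL] using hLip p hp q hq).continuousOn
  have hy_cont := hy.1.continuousOn hT
  have hu_cont := hu.continuousOn hT
  have hFy := hF.comp hy_cont hyB
  have hFu := hF.comp hu_cont huB
  have hsub : Icc 0 t ⊆ Icc 0 T := Icc_subset_Icc_right ht.2
  have hdist : ContinuousOn (fun s => ‖y s - u s‖) (Icc 0 T) := (hy_cont.sub hu_cont).norm
  have hdist_sq : IntervalIntegrable (fun s => ‖y s - u s‖ ^ 2) volume 0 T :=
    (hdist.pow 2).intervalIntegrable_of_Icc hT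
  have hdist_memLp : MemLp (fun s => ‖y s - u s‖) 2 (volume.restrict (Ioc 0 t)) := by
    refine (memLp_two_iff_integrable_sq ?_).2 ?_
    · exact (hdist.aestronglyMeasurable measurableSet_Icc).mono_set (Ioc_subset_Icc_self.trans hsub)
    · exact ((hdist.pow 2).integrableOn_Icc).mono_set (Ioc_subset_Icc_self.trans hsub)
  rw [hy.sub_picardMap_eq_integral hFy.integrableOn_Icc hFu.integrableOn_Icc hf ht]
  calc ‖∫ s in (0:ℝ)..t, (F (y s) - F (u s))‖
      ≤ ∫ s in (0:ℝ)..t, L * ‖y s - u s‖ := by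
        refine intervalIntegral.norm_integral_le_of_norm_le ht.1 (ae_of_all _ fun s hs => ?_)
          (((continuousOn_const.mul hdist).mono hsub).intervalIntegrable_of_Icc ht.1)
        have hs' := hsub (Ioc_subset_Icc_self hs)
        exact hLip _ (hyB s hs') _ (huB s hs')
    _ = L * ∫ s in (0:ℝ)..t, ‖y s - u s‖ := intervalIntegral.integral_const_mul _ _
    _ ≤ L * (√t * √(∫ s in (0:ℝ)..t, ‖y s - u s‖ ^ 2)) := by
        gcongr
        simpa using intervalIntegral_le_sqrt_mul_sqrt_integral_sq ht.1 (fun s => norm_nonneg _)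
          hdist_memLp
    _ ≤ L * (√t * √(∫ s in (0:ℝ)..T, ‖y s - u s‖ ^ 2)) := by
        gcongr
        exact intervalIntegral.integral_mono_interval le_rfl ht.1 ht.2
          (ae_of_all _ fun s => sq_nonneg _) hdist_sq
    _ = L * √(∫ s in (0:ℝ)..T, ‖y s - u s‖ ^ 2) * √t := by ring

/-- Estimate (Eq_errest2): if `F` is `L`-Lipschitz on `B`, `y_*` is a strong solution of
the IVP staying in `B`, `u ∈ X` stays in `B`, and `w(t) = g + ∫₀ᵗ (F(u(s)) + f(s)) ds`,
then `‖y_* − w‖_{L²} ≤ (LT/√2) ‖y_* − u‖_{L²}`. -/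
theorem lsfem_lipschitz_L2_estimate
    {d : ℕ} {T : ℝ} (hT : 0 < T)
    (F : Euc d → Euc d) (f : ℝ → Euc d) (g : Euc d)
    (hf : MemLp f 2 (volume.restrict (Icc (0:ℝ) T)))
    (B : Set (Euc d)) (L : ℝ) (hL : 0 ≤ L)
    (hLip : ∀ p ∈ B, ∀ q ∈ B, ‖F p - F q‖ ≤ L * ‖p - q‖)
    (y y' : ℝ → Euc d) (hy : IsStrongSol T F f g y y')
    (hyB : ∀ t ∈ Icc (0:ℝ) T, y t ∈ B)
    (u u' : ℝ → Euc d) (hu : MemX T u u')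
    (huB : ∀ t ∈ Icc (0:ℝ) T, u t ∈ B) :
    L2norm T (fun t => y t - (g + ∫ s in (0:ℝ)..t, (F (u s) + f s))) ≤
      L * T / Real.sqrt 2 * L2norm T (fun t => y t - u t) := by
  calc L2norm T (fun t => y t - picardMap F f g u t)
      ≤ L * √(∫ s in (0:ℝ)..T, ‖y s - u s‖ ^ 2) * T / √2 :=
        L2norm_le_of_norm_le_mul_sqrt hT.le (by positivity) fun t ht =>
          norm_sub_picardMap_le hT.le hL hLip (hf.integrable one_le_two) hy hyB hu huB ht
    _ = L * T / √2 * L2norm T (fun t => y t - u t) := by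
        rw [L2norm]
        ring
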